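/- arXiv:1605.04796 — 2 statements merged into one kernel-verified Lean document; each statement's English description precedes it below -/
import Mathlib

section
/- Define SURE(s,θ) = 2σ²[1 − E(Z) + 2s E(Z²) − s (E(Z))²] where Z has density on (0,1) proportional to (1−z)^{-1/2}{θ+(1−θ)z}^{-1} exp(−sz). Then for s ≥ 1 and θ ≥ 1, SURE(s,θ)/(2σ²) ≤ 1 + 2θ(1+s)(C₁/s² + C₂/s^{3/2}), where C₁ = (1−5/(2e))^{-1/2} and C₂ = 16/15. -/
/-!
Since `E(Z) ≥ 0`, it suffices to bound `s E(Z²)`. As `1 ≤ θ + (1 - θ) z ≤ θ` on `[0, 1]`, the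
weight lies between `θ⁻¹ k` and `k`, where `k(z) = (1 - z)^(-1/2) e^(-s z)`, so
`E(Z²) ≤ θ ∫ z² k / ∫ k`. For `s ≤ 2` the trivial bound `E(Z²) ≤ 1` is enough. For `s ≥ 2`,
`∫ k ≥ ∫ (1 + z/2) e^(-s z) ≥ 1/s` because `3 s + 1 ≤ e^s`; splitting `∫ z² k` at `z = 40/49`,
where `√(1 - z) = 3/7`, gives `∫ z² k ≤ 14 / (3 s³) + (6/7) e^(-40 s/49) ≤ 6.8 / s³`, the
exponential term being controlled by `x³ e^(-x) ≤ (3/e)³`. Hence `s E(Z²) ≤ 6.8 θ / s`, which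
lies below the claimed bound since `C₁ ≥ 7/2`.
-/
open MeasureTheory Set

noncomputable def hsW (θ s z : ℝ) : ℝ :=
  (1 - z) ^ (-(1/2) : ℝ) * (θ + (1 - θ) * z)⁻¹ * Real.exp (-s * z)

noncomputable def hsE (θ s : ℝ) (k : ℕ) : ℝ :=
  (∫ z in Ioo (0:ℝ) 1, z ^ k * hsW θ s z) / (∫ z in Ioo (0:ℝ) 1, hsW θ s z)

/-- Component-wise SURE for the horseshoe regression, as a function of
`s = α̂²d²/(2σ²)` and `θ = 1/(τ²d²)`. -/
noncomputable def hsSURE (σ θ s : ℝ) : ℝ :=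
  2 * σ ^ 2 * (1 - hsE θ s 1 + 2 * s * hsE θ s 2 - s * (hsE θ s 1) ^ 2)

open Real

lemma pow_mul_exp_neg_le (n : ℕ) {x : ℝ} (hx : 0 ≤ x) :
    x ^ n * exp (-x) ≤ (n / exp 1) ^ n := by
  rcases n.eq_zero_or_pos with rfl | hn
  · simpa using exp_le_one_iff.2 (neg_nonpos.2 hx)
  have hn' : (0 : ℝ) < n := Nat.cast_pos.2 hn
  have hy : x / n * exp (-(x / n)) ≤ (exp 1)⁻¹ := by
    rw [exp_neg, ← div_eq_mul_inv, div_le_iff₀ (exp_pos _), ← exp_neg, ← exp_add]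
    linarith [add_one_le_exp (-1 + x / n)]
  calc x ^ n * exp (-x) = n ^ n * (x / n * exp (-(x / n))) ^ n := by
        rw [mul_pow, ← exp_nat_mul, div_pow]; field_simp
    _ ≤ n ^ n * (exp 1)⁻¹ ^ n := by gcongr
    _ = (n / exp 1) ^ n := by rw [div_eq_mul_inv, mul_pow]

lemma one_add_half_le_one_sub_rpow_neg_half {z : ℝ} (hz1 : z < 1) :
    1 + z / 2 ≤ (1 - z) ^ (-(1/2) : ℝ) := by
  have h : 0 < 1 - z := by linarith
  have hsq := sq_sqrt h.le
  rw [rpow_neg h.le, ← sqrt_eq_rpow, ← one_div, le_div_iff₀ (sqrt_pos.2 h)]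
  -- with `u = √(1 - z)` the claim reads `(u - 1)² (u + 2) ≥ 0`
  nlinarith [mul_nonneg (sq_nonneg (√(1 - z) - 1)) (by positivity : (0:ℝ) ≤ √(1 - z) + 2)]

lemma one_sub_rpow_neg_half_le_inv_sqrt {a z : ℝ} (hza : z ≤ a) (ha : a < 1) :
    (1 - z) ^ (-(1/2) : ℝ) ≤ (√(1 - a))⁻¹ := by
  rw [rpow_neg (by linarith), ← sqrt_eq_rpow]
  gcongr

lemma intervalIntegrable_one_sub_rpow_neg_half (a b : ℝ) :
    IntervalIntegrable (fun z => (1 - z) ^ (-(1/2) : ℝ)) volume a b := by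
  simpa using (intervalIntegral.intervalIntegrable_rpow' (a := 1 - a) (b := 1 - b)
    (r := -(1/2)) (by norm_num)).comp_sub_left 1

lemma integral_one_sub_rpow_neg_half (a : ℝ) :
    ∫ z in a..1, (1 - z) ^ (-(1/2) : ℝ) = 2 * √(1 - a) := by
  rw [intervalIntegral.integral_comp_sub_left (fun x => x ^ (-(1/2) : ℝ)),
    integral_rpow (Or.inl (by norm_num)), sub_self, zero_rpow (by norm_num), sqrt_eq_rpow]
  norm_num
  ring

lemma integral_one_add_half_mul_exp_neg {s : ℝ} (hs : 0 < s) :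
    ∫ z in (0:ℝ)..1, (1 + z / 2) * exp (-s * z) =
      (2 * s + 1 - exp (-s) * (3 * s + 1)) / (2 * s ^ 2) := by
  have hderiv : ∀ z ∈ uIcc (0:ℝ) 1,
      HasDerivAt (fun z => -exp (-s * z) * (1 / s + z / (2 * s) + 1 / (2 * s ^ 2)))
        ((1 + z / 2) * exp (-s * z)) z := by
    intro z _
    have hexp : HasDerivAt (fun z => exp (-s * z)) (exp (-s * z) * (-s)) z := by
      simpa using ((hasDerivAt_id z).const_mul (-s)).exp
    have hlin : HasDerivAt (fun z => 1 / s + z / (2 * s) + 1 / (2 * s ^ 2)) (1 / (2 * s)) z := by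
      simpa using
        (((hasDerivAt_id z).div_const (2 * s)).const_add (1 / s)).add_const (1 / (2 * s ^ 2))
    refine (hexp.neg.mul hlin).congr_deriv ?_
    simp only [Pi.neg_apply]
    field_simp
    ring
  rw [intervalIntegral.integral_eq_sub_of_hasDerivAt hderiv
    ((by fun_prop : Continuous _).intervalIntegrable _ _)]
  simp only [mul_zero, mul_one, exp_zero]
  field_simp
  ring

lemma intervalIntegrable_one_sub_rpow_neg_half_mul {g : ℝ → ℝ} {a b : ℝ}
    (hg : ContinuousOn g (uIcc a b)) :
    IntervalIntegrable (fun z => (1 - z) ^ (-(1/2) : ℝ) * g z) volume a b :=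
  (intervalIntegrable_one_sub_rpow_neg_half a b).mul_continuousOn hg

lemma intervalIntegrable_pow_mul_one_sub_rpow_neg_half_mul_exp (k : ℕ) (s a b : ℝ) :
    IntervalIntegrable (fun z => z ^ k * ((1 - z) ^ (-(1/2) : ℝ) * exp (-s * z))) volume a b := by
  convert intervalIntegrable_one_sub_rpow_neg_half_mul (g := fun z => z ^ k * exp (-s * z))
    (a := a) (b := b) (by fun_prop) using 1
  ext z
  ring

lemma inv_le_integral_one_sub_rpow_neg_half_mul_exp {s : ℝ} (hs : 0 < s)
    (h : 3 * s + 1 ≤ exp s) :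
    1 / s ≤ ∫ z in (0:ℝ)..1, (1 - z) ^ (-(1/2) : ℝ) * exp (-s * z) := by
  have hdecay : exp (-s) * (3 * s + 1) ≤ 1 := by
    rwa [exp_neg, inv_mul_le_iff₀ (exp_pos s), mul_one]
  calc 1 / s ≤ (2 * s + 1 - exp (-s) * (3 * s + 1)) / (2 * s ^ 2) := by
        rw [div_le_div_iff₀ hs (by positivity)]
        nlinarith
    _ = ∫ z in (0:ℝ)..1, (1 + z / 2) * exp (-s * z) :=
        (integral_one_add_half_mul_exp_neg hs).symm
    _ ≤ ∫ z in (0:ℝ)..1, (1 - z) ^ (-(1/2) : ℝ) * exp (-s * z) := by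
        refine intervalIntegral.integral_mono_on_of_le_Ioo zero_le_one
          ((by fun_prop : Continuous _).intervalIntegrable _ _)
          (intervalIntegrable_one_sub_rpow_neg_half_mul (by fun_prop)) fun z hz => ?_
        gcongr
        exact one_add_half_le_one_sub_rpow_neg_half hz.2

lemma integral_sq_mul_one_sub_rpow_neg_half_mul_exp_le {s a : ℝ} (hs : 0 < s) (ha0 : 0 ≤ a)
    (ha1 : a < 1) :
    ∫ z in (0:ℝ)..1, z ^ 2 * ((1 - z) ^ (-(1/2) : ℝ) * exp (-s * z)) ≤
      2 / (√(1 - a) * s ^ 3) + 2 * √(1 - a) * exp (-(s * a)) := by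
  have hint := intervalIntegrable_pow_mul_one_sub_rpow_neg_half_mul_exp 2 s
  have head : ∫ z in (0:ℝ)..a, z ^ 2 * ((1 - z) ^ (-(1/2) : ℝ) * exp (-s * z)) ≤
      2 / (√(1 - a) * s ^ 3) :=
    calc _ ≤ ∫ z in (0:ℝ)..a, (√(1 - a))⁻¹ * (z ^ 2 * exp (-(s * z))) := by
          refine intervalIntegral.integral_mono_on ha0 (hint 0 a)
            ((by fun_prop : Continuous _).intervalIntegrable _ _) fun z hz => ?_
          rw [neg_mul, mul_left_comm]
          gcongr
          exact one_sub_rpow_neg_half_le_inv_sqrt hz.2 ha1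
      _ ≤ (√(1 - a))⁻¹ * (Nat.factorial 2 / s ^ (2 + 1)) := by
          rw [intervalIntegral.integral_const_mul]
          gcongr
          exact intervalIntegral_pow_mul_exp_neg_le ha0 hs
      _ = 2 / (√(1 - a) * s ^ 3) := by
          norm_num [Nat.factorial]
          field_simp
  have tail : ∫ z in a..1, z ^ 2 * ((1 - z) ^ (-(1/2) : ℝ) * exp (-s * z)) ≤
      2 * √(1 - a) * exp (-(s * a)) :=
    calc _ ≤ ∫ z in a..1, exp (-(s * a)) * (1 - z) ^ (-(1/2) : ℝ) := by
          refine intervalIntegral.integral_mono_on_of_le_Ioo ha1.le (hint a 1)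
            ((intervalIntegrable_one_sub_rpow_neg_half a 1).const_mul _) fun z hz => ?_
          have hz2 : z ^ 2 ≤ 1 := pow_le_one₀ (by linarith [hz.1]) hz.2.le
          have hexp : exp (-s * z) ≤ exp (-(s * a)) := by
            gcongr
            nlinarith [hz.1]
          have hrpow : 0 ≤ (1 - z) ^ (-(1/2) : ℝ) := rpow_nonneg (by linarith [hz.2]) _
          calc z ^ 2 * ((1 - z) ^ (-(1/2) : ℝ) * exp (-s * z))
              ≤ 1 * ((1 - z) ^ (-(1/2) : ℝ) * exp (-(s * a))) := by gcongr
            _ = _ := by ring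
      _ = 2 * √(1 - a) * exp (-(s * a)) := by
          rw [intervalIntegral.integral_const_mul, integral_one_sub_rpow_neg_half]
          ring
  rw [← intervalIntegral.integral_add_adjacent_intervals (hint 0 a) (hint a 1)]
  exact add_le_add head tail

lemma integral_sq_mul_one_sub_rpow_neg_half_mul_exp_le_div_cube {s : ℝ} (hs : 0 < s) :
    ∫ z in (0:ℝ)..1, z ^ 2 * ((1 - z) ^ (-(1/2) : ℝ) * exp (-s * z)) ≤ 34 / 5 / s ^ 3 := by
  have hsqrt : √(1 - 40 / 49 : ℝ) = 3 / 7 := by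
    rw [sqrt_eq_iff_mul_self_eq] <;> norm_num
  have hpeak : s ^ 3 * exp (-(s * (40 / 49))) ≤ 112 / 45 := by
    have he : (2.718 : ℝ) ≤ exp 1 := exp_one_gt_d9.le.trans' (by norm_num)
    have := pow_mul_exp_neg_le 3 (by positivity : 0 ≤ s * (40 / 49))
    calc s ^ 3 * exp (-(s * (40 / 49)))
        = (49 / 40) ^ 3 * ((s * (40 / 49)) ^ 3 * exp (-(s * (40 / 49)))) := by ring
      _ ≤ (49 / 40) ^ 3 * (3 / exp 1) ^ 3 := by gcongr; exact_mod_cast this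
      _ ≤ (49 / 40) ^ 3 * (3 / 2.718) ^ 3 := by gcongr
      _ ≤ 112 / 45 := by norm_num
  refine (integral_sq_mul_one_sub_rpow_neg_half_mul_exp_le hs (a := 40 / 49) (by norm_num)
    (by norm_num)).trans ?_
  rw [hsqrt, le_div_iff₀ (by positivity)]
  calc (2 / (3 / 7 * s ^ 3) + 2 * (3 / 7) * exp (-(s * (40 / 49)))) * s ^ 3
      = 14 / 3 + 6 / 7 * (s ^ 3 * exp (-(s * (40 / 49)))) := by field_simp; ring
    _ ≤ 34 / 5 := by linarith

lemma three_mul_add_one_le_exp {s : ℝ} (hs : 2 ≤ s) : 3 * s + 1 ≤ exp s := by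
  have he2 : 7 ≤ exp 2 := by
    have he : (2.718 : ℝ) ≤ exp 1 := exp_one_gt_d9.le.trans' (by norm_num)
    calc (7 : ℝ) ≤ 2.718 ^ 2 := by norm_num
      _ ≤ exp 1 ^ 2 := by gcongr
      _ = exp 2 := by rw [← exp_nat_mul]; norm_num
  have := add_one_le_exp (s - 2)
  calc 3 * s + 1 ≤ 7 * (s - 2 + 1) := by linarith
    _ ≤ exp 2 * exp (s - 2) := by gcongr
    _ = exp s := by rw [← exp_add]; ring_nf

lemma seven_halves_le_one_sub_five_div_two_exp_rpow :
    7 / 2 ≤ (1 - 5 / (2 * exp 1)) ^ (-(1/2) : ℝ) := by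
  have he : exp 1 < 2.7182818286 := exp_one_lt_d9
  have hpos : 0 < 1 - 5 / (2 * exp 1) := by
    rw [sub_pos, div_lt_one (by positivity)]
    linarith [exp_one_gt_d9]
  have hsmall : 1 - 5 / (2 * exp 1) ≤ (2 / 7) ^ 2 := by
    have : 5 / (2 * 2.7182818286) ≤ 5 / (2 * exp 1) := by gcongr
    linarith [show (1 : ℝ) - 5 / (2 * 2.7182818286) ≤ (2 / 7) ^ 2 by norm_num]
  rw [rpow_neg hpos.le, ← sqrt_eq_rpow, le_inv_comm₀ (by norm_num) (sqrt_pos.2 hpos)]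
  calc √(1 - 5 / (2 * exp 1)) ≤ √((2 / 7) ^ 2) := sqrt_le_sqrt hsmall
    _ = (7 / 2)⁻¹ := by rw [sqrt_sq (by norm_num)]; norm_num

section Horseshoe

variable {θ s z : ℝ}

lemma hsW_eq : hsW θ s z = (θ + (1 - θ) * z)⁻¹ * ((1 - z) ^ (-(1/2) : ℝ) * exp (-s * z)) := by
  unfold hsW
  ring

lemma one_sub_rpow_neg_half_mul_exp_nonneg (hz1 : z ≤ 1) :
    0 ≤ (1 - z) ^ (-(1/2) : ℝ) * exp (-s * z) :=
  mul_nonneg (rpow_nonneg (by linarith) _) (exp_pos _).le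

lemma hsW_nonneg (hθ : 1 ≤ θ) (hz1 : z ≤ 1) : 0 ≤ hsW θ s z := by
  rw [hsW_eq]
  exact mul_nonneg (inv_nonneg.2 (by nlinarith)) (one_sub_rpow_neg_half_mul_exp_nonneg hz1)

lemma hsW_le (hθ : 1 ≤ θ) (hz1 : z ≤ 1) :
    hsW θ s z ≤ (1 - z) ^ (-(1/2) : ℝ) * exp (-s * z) := by
  rw [hsW_eq]
  exact mul_le_of_le_one_left (one_sub_rpow_neg_half_mul_exp_nonneg hz1)
    (inv_le_one_of_one_le₀ (by nlinarith))

lemma inv_mul_le_hsW (hθ : 1 ≤ θ) (hz0 : 0 ≤ z) (hz1 : z ≤ 1) :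
    θ⁻¹ * ((1 - z) ^ (-(1/2) : ℝ) * exp (-s * z)) ≤ hsW θ s z := by
  rw [hsW_eq]
  exact mul_le_mul_of_nonneg_right (inv_anti₀ (by nlinarith) (by nlinarith))
    (one_sub_rpow_neg_half_mul_exp_nonneg hz1)

lemma intervalIntegrable_pow_mul_hsW (hθ : 1 ≤ θ) (k : ℕ) :
    IntervalIntegrable (fun z => z ^ k * hsW θ s z) volume 0 1 := by
  have hcont : ContinuousOn (fun z => z ^ k * (θ + (1 - θ) * z)⁻¹ * exp (-s * z)) (uIcc 0 1) := by
    refine ContinuousOn.mul (ContinuousOn.mul (by fun_prop) ?_) (by fun_prop)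
    refine ContinuousOn.inv₀ (by fun_prop) fun z hz => ?_
    rw [uIcc_of_le zero_le_one] at hz
    nlinarith [hz.1, hz.2]
  convert intervalIntegrable_one_sub_rpow_neg_half_mul hcont using 1
  ext z
  unfold hsW
  ring

lemma intervalIntegrable_hsW (hθ : 1 ≤ θ) : IntervalIntegrable (hsW θ s) volume 0 1 := by
  simpa using intervalIntegrable_pow_mul_hsW (s := s) hθ 0

lemma hsE_eq (k : ℕ) :
    hsE θ s k = (∫ z in (0:ℝ)..1, z ^ k * hsW θ s z) / ∫ z in (0:ℝ)..1, hsW θ s z := by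
  simp only [hsE, intervalIntegral.integral_of_le zero_le_one, integral_Ioc_eq_integral_Ioo]

lemma hsE_nonneg (hθ : 1 ≤ θ) (k : ℕ) : 0 ≤ hsE θ s k := by
  rw [hsE_eq]
  exact div_nonneg
    (intervalIntegral.integral_nonneg zero_le_one fun z hz =>
      mul_nonneg (pow_nonneg hz.1 k) (hsW_nonneg hθ hz.2))
    (intervalIntegral.integral_nonneg zero_le_one fun z hz => hsW_nonneg hθ hz.2)

lemma hsE_le_one (hθ : 1 ≤ θ) (k : ℕ) : hsE θ s k ≤ 1 := by
  rw [hsE_eq]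
  refine div_le_one_of_le₀ (intervalIntegral.integral_mono_on zero_le_one
      (intervalIntegrable_pow_mul_hsW hθ k) (intervalIntegrable_hsW hθ) fun z hz => ?_)
    (intervalIntegral.integral_nonneg zero_le_one fun z hz => hsW_nonneg hθ hz.2)
  exact mul_le_of_le_one_left (hsW_nonneg hθ hz.2) (pow_le_one₀ hz.1 hz.2)

lemma hsE_two_le (hθ : 1 ≤ θ) (hs : 2 ≤ s) : hsE θ s 2 ≤ 34 / 5 * θ / s ^ 2 := by
  have hs0 : 0 < s := by linarith
  have hθ0 : 0 < θ := by linarith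
  have hnum : ∫ z in (0:ℝ)..1, z ^ 2 * hsW θ s z ≤ 34 / 5 / s ^ 3 := by
    refine le_trans (intervalIntegral.integral_mono_on zero_le_one
      (intervalIntegrable_pow_mul_hsW hθ 2)
      (intervalIntegrable_pow_mul_one_sub_rpow_neg_half_mul_exp 2 s 0 1) fun z hz => ?_)
      (integral_sq_mul_one_sub_rpow_neg_half_mul_exp_le_div_cube hs0)
    exact mul_le_mul_of_nonneg_left (hsW_le hθ hz.2) (sq_nonneg z)
  have hden : θ⁻¹ * (1 / s) ≤ ∫ z in (0:ℝ)..1, hsW θ s z := by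
    calc θ⁻¹ * (1 / s)
        ≤ θ⁻¹ * ∫ z in (0:ℝ)..1, (1 - z) ^ (-(1/2) : ℝ) * exp (-s * z) := by
          gcongr
          exact inv_le_integral_one_sub_rpow_neg_half_mul_exp hs0 (three_mul_add_one_le_exp hs)
      _ ≤ ∫ z in (0:ℝ)..1, hsW θ s z := by
          rw [← intervalIntegral.integral_const_mul]
          exact intervalIntegral.integral_mono_on zero_le_one
            ((intervalIntegrable_one_sub_rpow_neg_half_mul (by fun_prop)).const_mul _)
            (intervalIntegrable_hsW hθ) fun z hz => inv_mul_le_hsW hθ hz.1 hz.2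
  rw [hsE_eq]
  calc _ ≤ 34 / 5 / s ^ 3 / (θ⁻¹ * (1 / s)) :=
        div_le_div₀ (by positivity) hnum (by positivity) hden
    _ = 34 / 5 * θ / s ^ 2 := by field_simp

lemma mul_hsE_two_le (hθ : 1 ≤ θ) (hs : 1 ≤ s) :
    s * hsE θ s 2 ≤ θ * (1 + s) *
      ((1 - 5 / (2 * exp 1)) ^ (-(1/2) : ℝ) / s ^ 2 + 16 / 15 / s ^ ((3 : ℝ) / 2)) := by
  have hs0 : 0 < s := by linarith
  have hC₁ := seven_halves_le_one_sub_five_div_two_exp_rpow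
  have hrpow : s ^ ((3 : ℝ) / 2) = √s * s := by
    rw [show (3 : ℝ) / 2 = 1 / 2 + 1 by norm_num, rpow_add hs0, rpow_one, sqrt_eq_rpow]
  suffices h : s * hsE θ s 2 ≤ θ * ((1 + s) * (7 / 2 / s ^ 2 + 16 / 15 / (√s * s))) by
    rw [hrpow, mul_assoc]
    refine h.trans (mul_le_mul_of_nonneg_left ?_ (by linarith))
    gcongr
  rcases le_total s 2 with hs2 | hs2
  · calc s * hsE θ s 2 ≤ s * 1 := by gcongr; exact hsE_le_one hθ 2
      _ ≤ 1 * ((1 + s) * (7 / 2 / s ^ 2)) := by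
          rw [one_mul, mul_div_assoc', le_div_iff₀ (by positivity)]
          nlinarith
      _ ≤ θ * ((1 + s) * (7 / 2 / s ^ 2 + 16 / 15 / (√s * s))) := by
          gcongr
          exact le_add_of_nonneg_right (by positivity)
  · have hpoly : 34 / 5 / s ≤ (1 + s) * (7 / 2 / s ^ 2 + 16 / 15 / (√s * s)) := by
      obtain ⟨t, ht0, rfl⟩ : ∃ t, 0 < t ∧ s = t ^ 2 :=
        ⟨√s, sqrt_pos.2 hs0, (sq_sqrt hs0.le).symm⟩
      rw [sqrt_sq ht0.le]
      field_simp
      nlinarith [mul_nonneg (sq_nonneg (t - 2)) ht0.le]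
    calc s * hsE θ s 2 ≤ s * (34 / 5 * θ / s ^ 2) := by gcongr; exact hsE_two_le hθ hs2
      _ = θ * (34 / 5 / s) := by field_simp
      _ ≤ θ * ((1 + s) * (7 / 2 / s ^ 2 + 16 / 15 / (√s * s))) := by gcongr

end Horseshoe

theorem stmt10 (σ θ s : ℝ) (hσ : 0 < σ) (hθ : 1 ≤ θ) (hs : 1 ≤ s) :
    hsSURE σ θ s / (2 * σ ^ 2) ≤
      1 + 2 * θ * (1 + s) *
        ((1 - 5 / (2 * Real.exp 1)) ^ (-(1/2) : ℝ) / s ^ 2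
          + (16 / 15) / s ^ ((3 : ℝ) / 2)) := by
  have hSURE : hsSURE σ θ s / (2 * σ ^ 2) =
      1 - hsE θ s 1 + 2 * (s * hsE θ s 2) - s * hsE θ s 1 ^ 2 := by
    rw [hsSURE, mul_div_cancel_left₀ _ (by positivity)]
    ring
  rw [hSURE]
  have hE₁ := hsE_nonneg (s := s) hθ 1
  have hE₂ := mul_hsE_two_le hθ hs
  linarith [mul_nonneg (by linarith : 0 ≤ s) (sq_nonneg (hsE θ s 1))]
end

section
/- Let SURE(s) = 2σ²[1 − E(Z) + s E(Z²) + s Var(Z)] where Z has density on (0,1) proportional to (1−z)^{-1/2}{θ+(1−θ)z}^{-1} exp(−sz) with fixed θ > 0. Then SURE(s) is a nondecreasing (indeed increasing) function of s on the interval [0,1]. -/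
/-!
The weight `(1 - z)^(-1/2) (θ + (1 - θ) z)⁻¹ e^(-s z)` is the exponential tilt `g(z) e^(-s z)` of a
fixed positive integrable density `g` on `(0, 1)`, so the moments `mₖ(s) = E_s[Z^k]` satisfy
`mₖ' = -(mₖ₊₁ - m₁ mₖ)`. Hence `(-E Z)' = Var Z`, `(s E Z²)' = s E Z E Z² + E[Z² (1 - s Z)]` and
`(s Var Z)' = E[(Z - μ)² (1 - s (Z - μ))]`. For `0 ≤ s ≤ 1` and `0 < Z < 1` the last two
integrands are nonnegative while `Var Z > 0`, so SURE has a positive derivative on `[0, 1]`.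
-/

open MeasureTheory Set

/-- SURE(s) = 2σ²[1 − E(Z) + s E(Z²) + s Var(Z)] with Var(Z) = E(Z²) − (E Z)². -/
noncomputable def hsSURE' (σ θ s : ℝ) : ℝ :=
  2 * σ ^ 2 * (1 - hsE θ s 1 + s * hsE θ s 2 + s * (hsE θ s 2 - (hsE θ s 1) ^ 2))

namespace ExpTilt

noncomputable def tiltedIntegral (g : ℝ → ℝ) (s : ℝ) (f : ℝ → ℝ) : ℝ :=
  ∫ z in Ioo 0 1, g z * (f z * Real.exp (-s * z))

noncomputable def tiltedMean (g : ℝ → ℝ) (s : ℝ) (f : ℝ → ℝ) : ℝ :=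
  tiltedIntegral g s f / tiltedIntegral g s 1

/-- `SURE(s) / (2σ²)` when `Z` has density proportional to `g(z) e^(-s z)` on `(0, 1)`. -/
noncomputable def sure (g : ℝ → ℝ) (s : ℝ) : ℝ :=
  1 - tiltedMean g s (· ^ 1) + s * tiltedMean g s (· ^ 2)
    + s * (tiltedMean g s (· ^ 2) - tiltedMean g s (· ^ 1) ^ 2)

noncomputable def sureDeriv (g : ℝ → ℝ) (s : ℝ) : ℝ :=
  tiltedMean g s (fun z => (z - tiltedMean g s (· ^ 1)) ^ 2)
    + (s * tiltedMean g s (· ^ 1) * tiltedMean g s (· ^ 2)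
      + tiltedMean g s (fun z => z ^ 2 * (1 - s * z)))
    + tiltedMean g s (fun z => (z - tiltedMean g s (· ^ 1)) ^ 2
      * (1 - s * (z - tiltedMean g s (· ^ 1))))

section

variable {g : ℝ → ℝ}

lemma integrableOn_tilted (hg : IntegrableOn g (Ioo 0 1)) (s : ℝ) {f : ℝ → ℝ}
    (hf : Continuous f) :
    IntegrableOn (fun z => g z * (f z * Real.exp (-s * z))) (Ioo 0 1) :=
  hg.mul_continuousOn_of_subset (by fun_prop) measurableSet_Ioo isCompact_Icc
    Ioo_subset_Icc_self

lemma tiltedIntegral_nonneg (hg : ∀ z ∈ Ioo (0:ℝ) 1, 0 ≤ g z) (s : ℝ) {f : ℝ → ℝ}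
    (hf : ∀ z ∈ Ioo (0:ℝ) 1, 0 ≤ f z) : 0 ≤ tiltedIntegral g s f :=
  setIntegral_nonneg measurableSet_Ioo fun z hz =>
    mul_nonneg (hg z hz) (mul_nonneg (hf z hz) (Real.exp_pos _).le)

lemma tiltedIntegral_pos (hg_int : IntegrableOn g (Ioo 0 1))
    (hg_pos : ∀ z ∈ Ioo (0:ℝ) 1, 0 < g z) (s : ℝ) {f : ℝ → ℝ} (hf : Continuous f)
    (hf_nonneg : ∀ z ∈ Ioo (0:ℝ) 1, 0 ≤ f z) {x : ℝ} (hx : x ∈ Ioo (0:ℝ) 1) (hfx : f x ≠ 0) :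
    0 < tiltedIntegral g s f := by
  rw [tiltedIntegral, setIntegral_pos_iff_support_of_nonneg_ae
    (ae_restrict_of_forall_mem measurableSet_Ioo fun z hz =>
      mul_nonneg (hg_pos z hz).le (mul_nonneg (hf_nonneg z hz) (Real.exp_pos _).le))
    (integrableOn_tilted hg_int s hf)]
  have hsub : Function.support f ∩ Ioo 0 1 ⊆
      Function.support (fun z => g z * (f z * Real.exp (-s * z))) ∩ Ioo 0 1 :=
    fun z ⟨hfz, hz⟩ => ⟨mul_ne_zero (hg_pos z hz).ne' (mul_ne_zero hfz (Real.exp_pos _).ne'), hz⟩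
  exact ((hf.isOpen_support.inter isOpen_Ioo).measure_pos volume ⟨x, hfx, hx⟩).trans_le
    (measure_mono hsub)

lemma tiltedIntegral_one_pos (hg_int : IntegrableOn g (Ioo 0 1))
    (hg_pos : ∀ z ∈ Ioo (0:ℝ) 1, 0 < g z) (s : ℝ) : 0 < tiltedIntegral g s 1 :=
  tiltedIntegral_pos hg_int hg_pos s continuous_const (fun _ _ => zero_le_one)
    (x := 1 / 2) ⟨by norm_num, by norm_num⟩ one_ne_zero

lemma tiltedIntegral_add (hg : IntegrableOn g (Ioo 0 1)) {s : ℝ} {f₁ f₂ : ℝ → ℝ}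
    (hf₁ : Continuous f₁) (hf₂ : Continuous f₂) :
    tiltedIntegral g s (fun z => f₁ z + f₂ z) = tiltedIntegral g s f₁ + tiltedIntegral g s f₂ := by
  simp only [tiltedIntegral, add_mul, mul_add]
  exact integral_add (integrableOn_tilted hg s hf₁) (integrableOn_tilted hg s hf₂)

lemma tiltedIntegral_const_mul {s : ℝ} (c : ℝ) (f : ℝ → ℝ) :
    tiltedIntegral g s (fun z => c * f z) = c * tiltedIntegral g s f := by
  simp only [tiltedIntegral, ← integral_const_mul]
  congr 1
  funext z
  ring

lemma hasDerivAt_tiltedIntegral_pow (hg : IntegrableOn g (Ioo 0 1)) (k : ℕ) (s : ℝ) :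
    HasDerivAt (fun t => tiltedIntegral g t (· ^ k)) (-tiltedIntegral g s (· ^ (k + 1))) s := by
  have hderiv := hasDerivAt_integral_of_dominated_loc_of_deriv_le
    (μ := volume.restrict (Ioo 0 1)) (s := Metric.ball s 1)
    (F := fun t z => g z * (z ^ k * Real.exp (-t * z)))
    (F' := fun t z => g z * (-z ^ (k + 1) * Real.exp (-t * z)))
    (bound := fun z => ‖g z‖ * Real.exp (|s| + 1))
    (Metric.ball_mem_nhds s one_pos)
    (Filter.Eventually.of_forall fun t =>
      (integrableOn_tilted hg t (continuous_pow k)).aestronglyMeasurable)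
    (integrableOn_tilted hg s (continuous_pow k))
    (integrableOn_tilted hg s (continuous_pow (k + 1)).neg).aestronglyMeasurable
    (ae_restrict_of_forall_mem measurableSet_Ioo fun z hz t ht => by
      have ht' : |t| ≤ |s| + 1 := by
        have := abs_sub_abs_le_abs_sub t s
        rw [Metric.mem_ball, Real.dist_eq] at ht
        linarith
      have hexp : Real.exp (-t * z) ≤ Real.exp (|s| + 1) := Real.exp_le_exp.2 <| by
        nlinarith [mul_le_mul_of_nonneg_right (neg_le_abs t) hz.1.le,
          mul_le_mul_of_nonneg_left hz.2.le (abs_nonneg t)]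
      have hpow : z ^ (k + 1) ≤ 1 := pow_le_one₀ hz.1.le hz.2.le
      rw [norm_mul, norm_mul, norm_neg, Real.norm_of_nonneg (pow_nonneg hz.1.le _),
        Real.norm_of_nonneg (Real.exp_pos _).le]
      gcongr
      calc z ^ (k + 1) * Real.exp (-t * z) ≤ 1 * Real.exp (|s| + 1) := by gcongr
        _ = Real.exp (|s| + 1) := one_mul _)
    (hg.norm.mul_const _)
    (ae_restrict_of_forall_mem measurableSet_Ioo fun z _ t _ => by
      refine (((hasDerivAt_neg t).mul_const z).exp.const_mul (z ^ k)).const_mul (g z)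
        |>.congr_deriv ?_
      ring)
  refine hderiv.2.congr_deriv ?_
  rw [tiltedIntegral, ← integral_neg]
  simp only [neg_mul, mul_neg]

variable (hg_int : IntegrableOn g (Ioo 0 1)) (hg_pos : ∀ z ∈ Ioo (0:ℝ) 1, 0 < g z)
include hg_int hg_pos

lemma tiltedMean_nonneg (s : ℝ) {f : ℝ → ℝ} (hf : ∀ z ∈ Ioo (0:ℝ) 1, 0 ≤ f z) :
    0 ≤ tiltedMean g s f :=
  div_nonneg (tiltedIntegral_nonneg (fun z hz => (hg_pos z hz).le) s hf)
    (tiltedIntegral_one_pos hg_int hg_pos s).le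

lemma tiltedMean_cubic (s : ℝ) (f : ℝ → ℝ) (a b c d : ℝ)
    (hf : ∀ z, f z = a + b * z + c * z ^ 2 + d * z ^ 3) :
    tiltedMean g s f = a + b * tiltedMean g s (· ^ 1) + c * tiltedMean g s (· ^ 2)
      + d * tiltedMean g s (· ^ 3) := by
  have hf' : f = fun z => a * (1 : ℝ → ℝ) z + b * z ^ 1 + c * z ^ 2 + d * z ^ 3 := by
    funext z; simp [hf]
  have hnum : tiltedIntegral g s f = a * tiltedIntegral g s 1 + b * tiltedIntegral g s (· ^ 1)
      + c * tiltedIntegral g s (· ^ 2) + d * tiltedIntegral g s (· ^ 3) := by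
    rw [hf', tiltedIntegral_add hg_int, tiltedIntegral_add hg_int, tiltedIntegral_add hg_int,
      tiltedIntegral_const_mul, tiltedIntegral_const_mul, tiltedIntegral_const_mul,
      tiltedIntegral_const_mul] <;> fun_prop
  have hN := (tiltedIntegral_one_pos hg_int hg_pos s).ne'
  simp only [tiltedMean, hnum]
  field_simp

lemma tiltedMean_pos (s : ℝ) {f : ℝ → ℝ} (hf : Continuous f)
    (hf_nonneg : ∀ z ∈ Ioo (0:ℝ) 1, 0 ≤ f z) {x : ℝ} (hx : x ∈ Ioo (0:ℝ) 1) (hfx : f x ≠ 0) :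
    0 < tiltedMean g s f :=
  div_pos (tiltedIntegral_pos hg_int hg_pos s hf hf_nonneg hx hfx)
    (tiltedIntegral_one_pos hg_int hg_pos s)

lemma hasDerivAt_tiltedMean_pow (k : ℕ) (s : ℝ) :
    HasDerivAt (fun t => tiltedMean g t (· ^ k))
      (-(tiltedMean g s (· ^ (k + 1)) - tiltedMean g s (· ^ 1) * tiltedMean g s (· ^ k))) s := by
  have hone : ∀ t, tiltedIntegral g t (· ^ 0) = tiltedIntegral g t 1 := fun t => by
    simp only [pow_zero]; rfl
  have hN := (tiltedIntegral_one_pos hg_int hg_pos s).ne'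
  have hD := (hasDerivAt_tiltedIntegral_pow hg_int k s).div
    (hasDerivAt_tiltedIntegral_pow hg_int 0 s) ((hone s).symm ▸ hN)
  simp only [hone, zero_add] at hD
  refine hD.congr_deriv ?_
  simp only [tiltedMean]
  field_simp
  ring

lemma hasDerivAt_tiltedMean_id (s : ℝ) :
    HasDerivAt (fun t => tiltedMean g t (· ^ 1))
      (-tiltedMean g s (fun z => (z - tiltedMean g s (· ^ 1)) ^ 2)) s := by
  refine (hasDerivAt_tiltedMean_pow hg_int hg_pos 1 s).congr_deriv ?_
  set μ := tiltedMean g s (· ^ 1)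
  rw [tiltedMean_cubic hg_int hg_pos s (fun z => (z - μ) ^ 2) (μ ^ 2) (-2 * μ) 1 0 fun z => by ring]
  ring

lemma hasDerivAt_mul_tiltedMean_sq (s : ℝ) :
    HasDerivAt (fun t => t * tiltedMean g t (· ^ 2))
      (s * tiltedMean g s (· ^ 1) * tiltedMean g s (· ^ 2)
        + tiltedMean g s (fun z => z ^ 2 * (1 - s * z))) s := by
  refine ((hasDerivAt_id s).mul (hasDerivAt_tiltedMean_pow hg_int hg_pos 2 s)).congr_deriv ?_
  rw [tiltedMean_cubic hg_int hg_pos s (fun z => z ^ 2 * (1 - s * z)) 0 0 1 (-s) fun z => by ring]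
  simp only [id]
  ring

lemma hasDerivAt_mul_tiltedVariance (s : ℝ) :
    HasDerivAt (fun t => t * (tiltedMean g t (· ^ 2) - tiltedMean g t (· ^ 1) ^ 2))
      (tiltedMean g s fun z =>
        (z - tiltedMean g s (· ^ 1)) ^ 2 * (1 - s * (z - tiltedMean g s (· ^ 1)))) s := by
  have h1 := hasDerivAt_tiltedMean_pow hg_int hg_pos 1 s
  have h2 := hasDerivAt_tiltedMean_pow hg_int hg_pos 2 s
  refine ((hasDerivAt_id s).mul (h2.sub (h1.pow 2))).congr_deriv ?_
  set μ := tiltedMean g s (· ^ 1)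
  rw [tiltedMean_cubic hg_int hg_pos s (fun z => (z - μ) ^ 2 * (1 - s * (z - μ)))
    (μ ^ 2 + s * μ ^ 3) (-2 * μ - 3 * s * μ ^ 2) (1 + 3 * s * μ) (-s) fun z => by ring]
  simp only [id, Pi.sub_apply, Pi.pow_apply]
  ring

lemma hasDerivAt_sure (s : ℝ) : HasDerivAt (sure g) (sureDeriv g s) s :=
  (((hasDerivAt_const s 1).sub (hasDerivAt_tiltedMean_id hg_int hg_pos s)).add
    (hasDerivAt_mul_tiltedMean_sq hg_int hg_pos s)).add
    (hasDerivAt_mul_tiltedVariance hg_int hg_pos s) |>.congr_deriv (by rw [sureDeriv]; ring)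

lemma sureDeriv_pos {s : ℝ} (hs : s ∈ Icc (0:ℝ) 1) : 0 < sureDeriv g s := by
  set μ := tiltedMean g s (· ^ 1)
  have hμ : 0 ≤ μ := tiltedMean_nonneg hg_int hg_pos s fun z hz => pow_nonneg hz.1.le 1
  obtain ⟨x, hx, hxμ⟩ := ((Ioo_infinite zero_lt_one).sdiff (finite_singleton μ)).nonempty
  have hvar : 0 < tiltedMean g s (fun z => (z - μ) ^ 2) :=
    tiltedMean_pos hg_int hg_pos s (by fun_prop) (fun z _ => sq_nonneg _) hx
      (pow_ne_zero 2 (sub_ne_zero.2 hxμ))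
  have hsz : ∀ z ∈ Ioo (0:ℝ) 1, s * z ≤ 1 := fun z hz => by
    nlinarith [mul_le_mul_of_nonneg_left hz.2.le hs.1, hs.2]
  have hsq : 0 ≤ s * μ * tiltedMean g s (· ^ 2) :=
    mul_nonneg (mul_nonneg hs.1 hμ)
      (tiltedMean_nonneg hg_int hg_pos s fun z hz => pow_nonneg hz.1.le 2)
  have hQ : 0 ≤ tiltedMean g s (fun z => z ^ 2 * (1 - s * z)) :=
    tiltedMean_nonneg hg_int hg_pos s fun z hz => mul_nonneg (sq_nonneg z) (by linarith [hsz z hz])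
  have hR : 0 ≤ tiltedMean g s (fun z => (z - μ) ^ 2 * (1 - s * (z - μ))) :=
    tiltedMean_nonneg hg_int hg_pos s fun z hz =>
      mul_nonneg (sq_nonneg _) (by nlinarith [hsz z hz, mul_nonneg hs.1 hμ])
  exact add_pos_of_pos_of_nonneg (add_pos_of_pos_of_nonneg hvar (add_nonneg hsq hQ)) hR

lemma strictMonoOn_sure : StrictMonoOn (sure g) (Icc 0 1) :=
  strictMonoOn_of_hasDerivWithinAt_pos (convex_Icc 0 1)
    (fun s _ => (hasDerivAt_sure hg_int hg_pos s).continuousAt.continuousWithinAt)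
    (fun _ _ => (hasDerivAt_sure hg_int hg_pos _).hasDerivWithinAt)
    (fun _ hs => sureDeriv_pos hg_int hg_pos (interior_subset hs))

end

end ExpTilt

open ExpTilt

lemma hsW_eq_mul_exp (θ s z : ℝ) : hsW θ s z = hsW θ 0 z * Real.exp (-s * z) := by
  simp [hsW, mul_assoc]

lemma add_one_sub_mul_pos {θ : ℝ} (hθ : 0 < θ) {z : ℝ} (hz : z ∈ Icc (0:ℝ) 1) :
    0 < θ + (1 - θ) * z := by
  nlinarith [mul_nonneg hθ.le (sub_nonneg.2 hz.2), hz.1, hz.2]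

lemma hsW_zero_pos {θ : ℝ} (hθ : 0 < θ) : ∀ z ∈ Ioo (0:ℝ) 1, 0 < hsW θ 0 z := fun _ hz =>
  mul_pos (mul_pos (Real.rpow_pos_of_pos (sub_pos.2 hz.2) _)
    (inv_pos.2 (add_one_sub_mul_pos hθ (Ioo_subset_Icc_self hz)))) (Real.exp_pos _)

lemma integrableOn_one_sub_rpow_neg_half :
    IntegrableOn (fun z : ℝ => (1 - z) ^ (-(1/2) : ℝ)) (Ioo 0 1) := by
  have h := (intervalIntegral.intervalIntegrable_rpow' (r := -(1/2)) (a := 0) (b := 1)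
    (by norm_num)).comp_sub_left 1
  simp only [sub_zero, sub_self] at h
  exact ((intervalIntegrable_iff_integrableOn_Ioc_of_le zero_le_one).1 h.symm).mono_set
    Ioo_subset_Ioc_self

lemma integrableOn_hsW_zero {θ : ℝ} (hθ : 0 < θ) : IntegrableOn (hsW θ 0) (Ioo 0 1) :=
  (integrableOn_one_sub_rpow_neg_half.mul_continuousOn_of_subset
    (ContinuousOn.inv₀ (by fun_prop) fun z hz => (add_one_sub_mul_pos hθ hz).ne')
    measurableSet_Ioo isCompact_Icc Ioo_subset_Icc_self).mul_continuousOn_of_subset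
    (by fun_prop) measurableSet_Ioo isCompact_Icc Ioo_subset_Icc_self

lemma hsE_eq_tiltedMean (θ s : ℝ) (k : ℕ) : hsE θ s k = tiltedMean (hsW θ 0) s (· ^ k) := by
  simp only [hsE, tiltedMean, tiltedIntegral, hsW_eq_mul_exp θ s, Pi.one_apply, one_mul]
  congr 2
  funext z
  ring

theorem stmt15 (σ θ : ℝ) (hσ : 0 < σ) (hθ : 0 < θ) :
    StrictMonoOn (fun s => hsSURE' σ θ s) (Icc (0:ℝ) 1) := by
  have hsure : ∀ s, hsSURE' σ θ s = 2 * σ ^ 2 * sure (hsW θ 0) s := fun s => by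
    simp only [hsSURE', sure, hsE_eq_tiltedMean]
  intro a ha b hb hab
  simp only [hsure]
  exact mul_lt_mul_of_pos_left
    (strictMonoOn_sure (integrableOn_hsW_zero hθ) (hsW_zero_pos hθ) ha hb hab) (by positivity)
end
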